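/- arXiv:1711.03848 — 4 statements merged into one kernel-verified Lean document; each statement's English description precedes it below -/
import Mathlib

section
/- Let n ≥ 1 and 0 ≤ k ≤ n be integers. Then Σ_{j=k, j even}^{n} C(n,j) = (1/2)·[ Σ_{j=0}^{n−k} C(n,j) + (−1)^k · C(n−1, k−1) ] and Σ_{j=k, j odd}^{n} C(n,j) = (1/2)·[ Σ_{j=0}^{n−k} C(n,j) − (−1)^k · C(n−1, k−1) ], where by convention C(n−1, k−1) = 0 when k = 0. -/
/-!
The even and odd parts add up to `∑_{j=k}^{n} C(n,j)`, which is `∑_{j=0}^{n-k} C(n,j)` by the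
symmetry `C(n,j) = C(n,n-j)`, and differ by the alternating sum `∑_{j=k}^{n} (-1)^j C(n,j)`.
Since the full alternating sum of row `n ≥ 1` vanishes and its partial sums are
`∑_{j=0}^{m} (-1)^j C(n,j) = (-1)^m C(n-1,m)`, that alternating tail is `(-1)^k C(n-1,k-1)`.
-/

open Finset

theorem Nat.sum_Icc_choose_eq_sum_range_choose {n k : ℕ} (hk : k ≤ n) :
    ∑ j ∈ Icc k n, n.choose j = ∑ j ∈ range (n - k + 1), n.choose j := by
  refine sum_nbij' (n - ·) (n - ·) ?_ ?_ ?_ ?_ ?_ <;> intro j hj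
  all_goals simp only [mem_Icc, mem_range] at hj ⊢
  · omega
  · omega
  · omega
  · omega
  · exact (choose_symm hj.2).symm

theorem sum_filter_even_add_sum_filter_odd {M : Type*} [AddCommMonoid M] (s : Finset ℕ)
    (f : ℕ → M) : ∑ j ∈ s with Even j, f j + ∑ j ∈ s with Odd j, f j = ∑ j ∈ s, f j := by
  simp_rw [← Nat.not_even_iff_odd, sum_filter_add_sum_filter_not]

theorem sum_filter_even_sub_sum_filter_odd {R : Type*} [CommRing R] (s : Finset ℕ)
    (f : ℕ → R) :
    ∑ j ∈ s with Even j, f j - ∑ j ∈ s with Odd j, f j = ∑ j ∈ s, (-1) ^ j * f j := by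
  rw [← sum_filter_add_sum_filter_not s Even, sub_eq_add_neg, ← sum_neg_distrib]
  simp_rw [Nat.not_even_iff_odd]
  congr 1 <;> refine sum_congr rfl fun j hj => ?_ <;> rw [mem_filter] at hj
  · rw [hj.2.neg_one_pow, one_mul]
  · rw [hj.2.neg_one_pow, neg_one_mul]

theorem alternating_sum_Icc_choose_succ {R : Type*} [CommRing R] {n k : ℕ} (hk : k ≤ n) :
    ∑ j ∈ Icc (k + 1) (n + 1), (-1 : R) ^ j * (n + 1).choose j = (-1) ^ (k + 1) * n.choose k := by
  have hfull := congrArg (Int.cast : ℤ → R) (Int.alternating_sum_range_choose_of_ne n.succ_ne_zero)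
  have hpartial := congrArg (Int.cast : ℤ → R)
    (Int.alternating_sum_range_choose_eq_choose (n := n) (m := k))
  push_cast at hfull hpartial
  rw [← sum_range_add_sum_Ico _ (by omega : k + 1 ≤ n + 1 + 1), hpartial] at hfull
  rw [← Ico_add_one_right_eq_Icc]
  linear_combination hfull

theorem alternating_sum_Icc_choose {R : Type*} [CommRing R] {n k : ℕ} (hn : n ≠ 0) (hk : k ≤ n) :
    ∑ j ∈ Icc k n, (-1 : R) ^ j * n.choose j =
      (-1) ^ k * if k = 0 then 0 else ((n - 1).choose (k - 1) : R) := by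
  rcases k with _ | k
  · have hfull := congrArg (Int.cast : ℤ → R) (Int.alternating_sum_range_choose_of_ne hn)
    push_cast at hfull
    rw [← Ico_add_one_right_eq_Icc, ← range_eq_Ico, hfull, if_pos rfl, mul_zero]
  · obtain ⟨n, rfl⟩ := Nat.exists_eq_succ_of_ne_zero hn
    simpa using alternating_sum_Icc_choose_succ (R := R) (by omega : k ≤ n)

/-- For integers `1 ≤ n` and `0 ≤ k ≤ n`:
`Σ_{j=k, j even}^{n} C(n,j) = (1/2)·[ Σ_{j=0}^{n−k} C(n,j) + (−1)^k · C(n−1, k−1) ]` and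
`Σ_{j=k, j odd}^{n} C(n,j) = (1/2)·[ Σ_{j=0}^{n−k} C(n,j) − (−1)^k · C(n−1, k−1) ]`,
with the convention `C(n−1, k−1) = 0` when `k = 0`. -/
theorem sum_choose_parity (n k : ℕ) (hn : 1 ≤ n) (hk : k ≤ n) :
    (∑ j ∈ (Finset.Icc k n).filter (fun j => Even j), (n.choose j : ℝ)) =
      (1 / 2) * ((∑ j ∈ Finset.range (n - k + 1), (n.choose j : ℝ)) +
        (-1 : ℝ) ^ k * (if k = 0 then 0 else ((n - 1).choose (k - 1) : ℝ))) ∧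
    (∑ j ∈ (Finset.Icc k n).filter (fun j => Odd j), (n.choose j : ℝ)) =
      (1 / 2) * ((∑ j ∈ Finset.range (n - k + 1), (n.choose j : ℝ)) -
        (-1 : ℝ) ^ k * (if k = 0 then 0 else ((n - 1).choose (k - 1) : ℝ))) := by
  have hsum := sum_filter_even_add_sum_filter_odd (Icc k n) (fun j => (n.choose j : ℝ))
  have hdiff := sum_filter_even_sub_sum_filter_odd (Icc k n) (fun j => (n.choose j : ℝ))
  rw [alternating_sum_Icc_choose (by omega) hk] at hdiff
  have hsymm : ∑ j ∈ Icc k n, (n.choose j : ℝ) = ∑ j ∈ range (n - k + 1), (n.choose j : ℝ) := by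
    exact_mod_cast Nat.sum_Icc_choose_eq_sum_range_choose hk
  constructor <;> linarith
end

section
/- Let d ≥ 2 and let β_0, …, β_{d−1} be independent real-valued random variables with P(β_k > 0) = P(β_k < 0) = 1/2 for every k. Then for every 0 ≤ m ≤ d−1, the probability p_m that the polynomial P(y) = Σ_{k=0}^{d−1} β_k·C(d−1,k)·y^k has exactly m roots in (0, ∞) counted with multiplicity satisfies p_m ≤ (1/2^d)·[ Σ_{j=0}^{d−1−m} C(d−1, j) + C(d−2, m−1) ], where by convention C(d−2, −1) = 0. -/
/-
Once every β_k is nonzero, which happens almost surely, the positive binomial weights make the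
coefficient signs of P those of β. Descartes' rule of signs then bounds the number of positive
roots by the number V of sign changes of (β_0, …, β_{d−1}), and the two numbers have the same
parity: both are even exactly when β_0 and β_{d−1} have the same sign. The signs of the β_k are
independent fair coins, so p_m is at most 2^{−d} times the number of sign patterns with V ≥ m and
V ≡ m (mod 2). A pattern is determined by its first sign and its set of change positions, so
exactly 2·C(d−1, v) patterns have v changes, and Pascal's rule evaluates the resulting
parity-restricted sum of binomial coefficients.
-/

open MeasureTheory ProbabilityTheory Polynomial

/-- The number of roots in `(0, ∞)`, counted with multiplicity, of the polynomial
`P(y) = Σ_{k=0}^{d−1} β_k · C(d−1, k) · y^k`. Its positive roots are the internal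
equilibria of a `d`-player two-strategy random evolutionary game. -/
noncomputable def numInternalEquilibria (d : ℕ) (β : Fin d → ℝ) : ℕ :=
  Multiset.card (Multiset.filter (fun y => 0 < y)
    (Polynomial.roots (∑ k : Fin d,
      Polynomial.C (β k * ((d - 1).choose (k : ℕ) : ℝ)) * Polynomial.X ^ (k : ℕ))))

open Finset

def signChanges {n : ℕ} (σ : Fin (n + 1) → Bool) : ℕ := #{i : Fin n | σ i.castSucc ≠ σ i.succ}

theorem signChanges_succ {n : ℕ} (σ : Fin (n + 2) → Bool) :
    signChanges σ = signChanges (fun i => σ i.castSucc) +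
      if σ (Fin.last n).castSucc ≠ σ (Fin.last (n + 1)) then 1 else 0 := by
  simp only [signChanges, card_filter, Fin.sum_univ_castSucc, Fin.succ_castSucc, Fin.succ_last]

theorem even_signChanges_iff {n : ℕ} (σ : Fin (n + 1) → Bool) :
    Even (signChanges σ) ↔ σ 0 = σ (Fin.last n) := by
  induction n with
  | zero => simp [signChanges, Fin.last]
  | succ n ih =>
    rw [signChanges_succ, Nat.even_add, ih]
    simp only [Fin.castSucc_zero]
    generalize σ 0 = a, σ (Fin.last n).castSucc = b, σ (Fin.last (n + 1)) = c
    cases a <;> cases b <;> cases c <;> decide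

theorem sum_signChanges {M : Type*} [AddCommMonoid M] (n : ℕ) (f : ℕ → M) :
    ∑ σ : Fin (n + 1) → Bool, f (signChanges σ) = 2 • ∑ k ∈ range (n + 1), n.choose k • f k := by
  let F : (Fin (n + 1) → Bool) → Bool × Finset (Fin n) :=
    fun σ => (σ 0, ({i | σ i.castSucc ≠ σ i.succ} : Finset (Fin n)))
  have hinj : F.Injective := by
    intro σ τ h
    simp only [F, Prod.mk.injEq, Finset.ext_iff, mem_filter, mem_univ, true_and] at h
    funext i
    induction i using Fin.induction with
    | zero => exact h.1
    | succ i ih =>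
      have hchange := h.2 i
      rw [ih] at hchange
      revert hchange
      cases σ i.succ <;> cases τ i.succ <;> cases τ i.castSucc <;> simp
  have hbij : F.Bijective := by
    rw [Fintype.bijective_iff_injective_and_card]
    exact ⟨hinj, by simp [Fintype.card_finset, pow_succ, mul_comm]⟩
  calc ∑ σ, f (signChanges σ) = ∑ p : Bool × Finset (Fin n), f p.2.card :=
        Fintype.sum_bijective F hbij _ _ fun σ => rfl
    _ = 2 • ∑ s : Finset (Fin n), f s.card := by
        rw [Fintype.sum_prod_type]; simp
    _ = 2 • ∑ k ∈ range (n + 1), n.choose k • f k := by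
        rw [← powerset_univ, sum_powerset_apply_card, card_univ, Fintype.card_fin]

theorem sum_range_choose_parity (n r : ℕ) :
    ∑ j ∈ range (r + 1), (if j % 2 = r % 2 then (n + 1).choose j else 0) =
      ∑ j ∈ range (r + 1), (if j % 2 = r % 2 then 0 else (n + 1).choose j) + n.choose r := by
  induction r with
  | zero => simp
  | succ r ih =>
    have hflip : ∀ j, j % 2 = (r + 1) % 2 ↔ ¬ j % 2 = r % 2 := by omega
    have hr : ¬ (r + 1) % 2 = r % 2 := by omega
    simp only [sum_range_succ (n := r + 1), hflip, ite_not, hr, if_false]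
    rw [Nat.choose_succ_succ']
    omega

theorem two_mul_sum_range_choose_parity (n r : ℕ) :
    2 * ∑ j ∈ range (r + 1), (if j % 2 = r % 2 then (n + 1).choose j else 0) =
      ∑ j ∈ range (r + 1), (n + 1).choose j + n.choose r := by
  have hsplit : ∑ j ∈ range (r + 1), (n + 1).choose j =
      ∑ j ∈ range (r + 1), (if j % 2 = r % 2 then (n + 1).choose j else 0) +
        ∑ j ∈ range (r + 1), (if j % 2 = r % 2 then 0 else (n + 1).choose j) := by
    rw [← sum_add_distrib]
    exact sum_congr rfl fun j _ => by split_ifs <;> simp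
  rw [hsplit, add_assoc, ← sum_range_choose_parity, two_mul]

theorem card_signChanges_ge_of_parity {n m : ℕ} (hm : m ≤ n + 1) :
    #{σ : Fin (n + 2) → Bool | m ≤ signChanges σ ∧ (Even (signChanges σ) ↔ Even m)} =
      ∑ j ∈ range (n + 1 - m + 1), (n + 1).choose j + if m = 0 then 0 else n.choose (m - 1) := by
  set r := n + 1 - m
  have hreflect : ∀ j ∈ range (n + 1 + 1),
      (if m ≤ n + 1 - j ∧ (Even (n + 1 - j) ↔ Even m) then (n + 1).choose (n + 1 - j) else 0) =
        if j ≤ r ∧ j % 2 = r % 2 then (n + 1).choose j else 0 := fun j hj => by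
    have hj : j ≤ n + 1 := Nat.lt_succ_iff.1 (mem_range.1 hj)
    rw [Nat.choose_symm hj]
    simp only [Nat.even_iff]
    split_ifs <;> omega
  have hrestrict : (range (n + 1 + 1)).filter (fun j => j ≤ r ∧ j % 2 = r % 2) =
      (range (r + 1)).filter (fun j => j % 2 = r % 2) := by
    ext j; simp only [mem_filter, mem_range]; omega
  have hsymm : (if m = 0 then 0 else n.choose (m - 1)) = n.choose r := by
    split_ifs with h
    · simp [r, h]
    · exact (Nat.choose_symm_of_eq_add (by omega)).symm
  rw [hsymm, ← two_mul_sum_range_choose_parity, card_filter,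
    sum_signChanges (n + 1) fun k => if m ≤ k ∧ (Even k ↔ Even m) then 1 else 0, smul_eq_mul]
  congr 1
  simp only [smul_eq_mul, mul_ite, mul_one, mul_zero]
  rw [← sum_range_reflect]
  simp only [Nat.add_sub_cancel]
  rw [sum_congr rfl hreflect, ← sum_filter, hrestrict, sum_filter]

theorem sign_eq_neg_sign_iff {R : Type*} [Zero R] [LinearOrder R] {a b : R} (ha : a ≠ 0)
    (hb : b ≠ 0) :
    SignType.sign a = -SignType.sign b ↔ decide (0 < a) ≠ decide (0 < b) := by
  rcases ha.lt_or_gt with ha | ha <;> rcases hb.lt_or_gt with hb | hb <;>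
    simp [sign_neg, sign_pos, ha, hb, ha.not_gt, hb.not_gt]

theorem decide_pos_eq_decide_pos_iff {R : Type*} [Ring R] [LinearOrder R] [IsStrictOrderedRing R]
    {a b : R} (ha : a ≠ 0) (hb : b ≠ 0) :
    decide (0 < a) = decide (0 < b) ↔ 0 < a * b := by
  rw [decide_eq_decide, mul_pos_iff]
  rcases ha.lt_or_gt with ha | ha <;> rcases hb.lt_or_gt with hb | hb <;>
    simp [ha, hb, ha.not_gt, hb.not_gt]

namespace Polynomial

/- Each positive root r contributes a factor X − r, which flips the sign of P(0) and keeps the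
leading coefficient; once no positive root is left, P has the sign of its leading coefficient on
[0, ∞). -/
theorem even_countP_pos_roots_iff {P : ℝ[X]} (h0 : P.eval 0 ≠ 0) :
    Even (P.roots.countP (0 < ·)) ↔ 0 < P.eval 0 * P.leadingCoeff := by
  generalize hN : P.roots.countP (0 < ·) = N
  induction N generalizing P with
  | zero =>
    have hP : P ≠ 0 := by rintro rfl; simp at h0
    have hroots : ∀ y, P.IsRoot y → y < 0 := by
      intro y hy
      rcases lt_trichotomy y 0 with hy0 | rfl | hy0
      · exact hy0
      · exact absurd hy h0
      · exact absurd hN (Multiset.countP_pos.2 ⟨y, (mem_roots hP).2 hy, hy0⟩).ne'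
    simp only [Even.zero, true_iff]
    rcases (leadingCoeff_ne_zero.2 hP).lt_or_gt with hlc | hlc
    · exact mul_pos_of_neg_of_neg
        (eval_lt_zero_of_roots_lt_of_leadingCoeff_nonpos hroots hlc.le) hlc
    · exact mul_pos (zero_lt_eval_of_roots_lt_of_leadingCoeff_nonneg hroots hlc.le) hlc
  | succ N ih =>
    obtain ⟨r, hr, hr0⟩ : ∃ r ∈ P.roots, 0 < r := Multiset.countP_pos.1 (hN ▸ N.succ_pos)
    obtain ⟨Q, rfl⟩ := dvd_iff_isRoot.2 (isRoot_of_mem_roots hr)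
    have hQ : Q ≠ 0 := right_ne_zero_of_mul (ne_zero_of_mem_roots hr)
    have hQ0 : Q.eval 0 ≠ 0 := by simp_all
    have hQN : Q.roots.countP (0 < ·) = N := by
      simpa [roots_mul (ne_zero_of_mem_roots hr), hr0] using hN
    have hQsign : Q.eval 0 * Q.leadingCoeff ≠ 0 := mul_ne_zero hQ0 (leadingCoeff_ne_zero.2 hQ)
    have hP : ((X - C r) * Q).eval 0 * ((X - C r) * Q).leadingCoeff =
        r * -(Q.eval 0 * Q.leadingCoeff) := by
      simp only [eval_mul, leadingCoeff_mul, leadingCoeff_X_sub_C, eval_sub, eval_X, eval_C]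
      ring
    rw [Nat.even_add_one, ih hQ0 hQN, hP, mul_pos_iff_of_pos_left hr0, neg_pos, not_lt,
      hQsign.le_iff_lt]

section Semiring

variable {R : Type*} [Semiring R] {n : ℕ} {c : Fin (n + 1) → R}

theorem degree_sum_fin_lt_degree_last (hc : c (Fin.last n) ≠ 0) :
    (∑ k : Fin n, C (c k.castSucc) * X ^ (k : ℕ)).degree < (C (c (Fin.last n)) * X ^ n).degree := by
  rw [degree_C_mul_X_pow n hc]
  exact degree_sum_fin_lt _

theorem leadingCoeff_sum_fin_C_mul_X_pow (hc : c (Fin.last n) ≠ 0) :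
    (∑ k : Fin (n + 1), C (c k) * X ^ (k : ℕ)).leadingCoeff = c (Fin.last n) := by
  simp only [Fin.sum_univ_castSucc, Fin.val_castSucc, Fin.val_last]
  rw [leadingCoeff_add_of_degree_lt (degree_sum_fin_lt_degree_last hc)]
  simp

theorem eraseLead_sum_fin_C_mul_X_pow (hc : c (Fin.last n) ≠ 0) :
    (∑ k : Fin (n + 1), C (c k) * X ^ (k : ℕ)).eraseLead =
      ∑ k : Fin n, C (c k.castSucc) * X ^ (k : ℕ) := by
  simp only [Fin.sum_univ_castSucc, Fin.val_castSucc, Fin.val_last]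
  rw [eraseLead_add_of_degree_lt_right (degree_sum_fin_lt_degree_last hc)]
  simp

theorem signVariations_sum_fin_C_mul_X_pow [LinearOrder R] (hc : ∀ k, c k ≠ 0) :
    (∑ k : Fin (n + 1), C (c k) * X ^ (k : ℕ)).signVariations =
      signChanges fun k => decide (0 < c k) := by
  induction n with
  | zero => simp [signChanges, ← monomial_zero_left]
  | succ n ih =>
    have hP : ∑ k : Fin (n + 2), C (c k) * X ^ (k : ℕ) ≠ 0 := by
      rw [← leadingCoeff_ne_zero, leadingCoeff_sum_fin_C_mul_X_pow (hc _)]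
      exact hc _
    rw [signVariations_eq_eraseLead_add_ite hP, eraseLead_sum_fin_C_mul_X_pow (hc _),
      ih fun k => hc _, leadingCoeff_sum_fin_C_mul_X_pow (hc _),
      leadingCoeff_sum_fin_C_mul_X_pow (c := fun k => c k.castSucc) (hc _), signChanges_succ]
    simp only [sign_eq_neg_sign_iff (hc _) (hc _), ne_comm]

end Semiring

theorem countP_pos_roots_le_signChanges {R : Type*} [CommRing R] [LinearOrder R]
    [IsStrictOrderedRing R] {n : ℕ} {c : Fin (n + 1) → R} (hc : ∀ k, c k ≠ 0) :
    (∑ k : Fin (n + 1), C (c k) * X ^ (k : ℕ)).roots.countP (0 < ·) ≤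
      signChanges fun k => decide (0 < c k) :=
  signVariations_sum_fin_C_mul_X_pow hc ▸ roots_countP_pos_le_signVariations _

theorem even_countP_pos_roots_iff_even_signChanges {n : ℕ} {c : Fin (n + 1) → ℝ}
    (hc : ∀ k, c k ≠ 0) :
    Even ((∑ k : Fin (n + 1), C (c k) * X ^ (k : ℕ)).roots.countP (0 < ·)) ↔
      Even (signChanges fun k => decide (0 < c k)) := by
  have heval : (∑ k : Fin (n + 1), C (c k) * X ^ (k : ℕ)).eval 0 = c 0 := by
    simp [eval_finsetSum, Fin.sum_univ_succ]
  rw [even_countP_pos_roots_iff (heval ▸ hc 0), heval, leadingCoeff_sum_fin_C_mul_X_pow (hc _),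
    even_signChanges_iff, decide_pos_eq_decide_pos_iff (hc _) (hc _)]

end Polynomial

theorem numInternalEquilibria_le_signChanges_and_even_iff {n : ℕ} {b : Fin (n + 1) → ℝ}
    (hb : ∀ k, b k ≠ 0) :
    numInternalEquilibria (n + 1) b ≤ signChanges (fun k => decide (0 < b k)) ∧
      (Even (numInternalEquilibria (n + 1) b) ↔ Even (signChanges fun k => decide (0 < b k))) := by
  have hchoose : ∀ k : Fin (n + 1), (0 : ℝ) < (n + 1 - 1).choose k :=
    fun k => Nat.cast_pos.2 (Nat.choose_pos (by omega))
  set c : Fin (n + 1) → ℝ := fun k => b k * (n + 1 - 1).choose k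
  have hc : ∀ k, c k ≠ 0 := fun k => mul_ne_zero (hb k) (hchoose k).ne'
  have hsign : (fun k => decide (0 < c k)) = fun k => decide (0 < b k) :=
    funext fun k => decide_eq_decide.2 (mul_pos_iff_of_pos_right (hchoose k))
  rw [numInternalEquilibria, ← Multiset.countP_eq_card_filter, ← hsign]
  exact ⟨countP_pos_roots_le_signChanges hc, even_countP_pos_roots_iff_even_signChanges hc⟩

theorem ae_ne_zero_of_measure_pos_add_measure_neg {Ω : Type*} [MeasurableSpace Ω] {μ : Measure Ω}
    [IsProbabilityMeasure μ] {X : Ω → ℝ} (hX : Measurable X)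
    (h : μ {ω | 0 < X ω} + μ {ω | X ω < 0} = 1) : ∀ᵐ ω ∂μ, X ω ≠ 0 := by
  have hdisj : Disjoint {ω | 0 < X ω} {ω | X ω < 0} :=
    Set.disjoint_left.2 fun _ h1 h2 => lt_asymm (α := ℝ) h1 h2
  have hmeas : MeasurableSet ({ω | 0 < X ω} ∪ {ω | X ω < 0}) :=
    (hX measurableSet_Ioi).union (hX measurableSet_Iio)
  have hfull : μ ({ω | 0 < X ω} ∪ {ω | X ω < 0}) = 1 := by
    rwa [measure_union hdisj (hX measurableSet_Iio)]
  filter_upwards [mem_ae_iff.2 ((prob_compl_eq_zero_iff hmeas).2 hfull)] with ω hω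
  rcases hω with hω | hω
  · exact (hω : 0 < X ω).ne'
  · exact (hω : X ω < 0).ne

theorem measure_signPattern_eq {Ω ι : Type*} [MeasurableSpace Ω] {μ : Measure Ω}
    [IsProbabilityMeasure μ] [Fintype ι] {β : ι → Ω → ℝ} (hmeas : ∀ k, Measurable (β k))
    (hindep : iIndepFun β μ) (hpos : ∀ k, μ {ω | 0 < β k ω} = 1 / 2) (σ : ι → Bool) :
    μ {ω | (fun k => decide (0 < β k ω)) = σ} = 2⁻¹ ^ Fintype.card ι := by
  let sets : ι → Set ℝ := fun k => if σ k then Set.Ioi 0 else Set.Iic 0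
  have hinter : {ω | (fun k => decide (0 < β k ω)) = σ} = ⋂ k ∈ univ, β k ⁻¹' sets k := by
    ext ω
    simp only [funext_iff, Set.mem_ofPred_eq, mem_univ, Set.iInter_true, Set.mem_iInter,
      Set.mem_preimage, sets]
    refine forall_congr' fun k => ?_
    cases σ k <;> simp
  have hsets : ∀ k ∈ univ, MeasurableSet (sets k) := fun k _ => by
    dsimp only [sets]
    split_ifs
    exacts [measurableSet_Ioi, measurableSet_Iic]
  have hhalf : ∀ k, μ (β k ⁻¹' sets k) = 2⁻¹ := fun k => by
    have hA : MeasurableSet {ω | 0 < β k ω} := hmeas k measurableSet_Ioi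
    dsimp only [sets]
    split_ifs
    · exact (hpos k).trans (one_div 2)
    · have : β k ⁻¹' Set.Iic 0 = {ω | 0 < β k ω}ᶜ := by ext; simp
      rw [this, prob_compl_eq_one_sub hA, hpos, one_div, ENNReal.one_sub_inv_two]
  rw [hinter, hindep.measure_inter_preimage_eq_mul _ hsets]
  simp [hhalf]

/-- Upper bound for the probability `p_m` that a `d`-player two-strategy random
evolutionary game (with symmetric i.i.d.-sign payoff differences) has exactly `m`
internal equilibria:
`p_m ≤ (1/2^d)·[ Σ_{j=0}^{d−1−m} C(d−1, j) + C(d−2, m−1) ]` (with `C(d−2, −1) = 0`). -/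
theorem prob_internalEquilibria_upper_bound
    {Ω : Type*} [MeasurableSpace Ω] (μ : Measure Ω) [IsProbabilityMeasure μ]
    (d : ℕ) (hd : 2 ≤ d) (β : Fin d → Ω → ℝ)
    (hmeas : ∀ k, Measurable (β k))
    (hindep : iIndepFun β μ)
    (hpos : ∀ k, μ {ω | 0 < β k ω} = 1 / 2)
    (hneg : ∀ k, μ {ω | β k ω < 0} = 1 / 2) :
    ∀ m ≤ d - 1,
      μ {ω | numInternalEquilibria d (fun k => β k ω) = m} ≤
        ((∑ j ∈ Finset.range (d - 1 - m + 1), ((d - 1).choose j : ENNReal)) +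
          (if m = 0 then 0 else ((d - 2).choose (m - 1) : ENNReal))) / 2 ^ d := by
  intro m hm
  obtain ⟨n, rfl⟩ : ∃ n, d = n + 2 := ⟨d - 2, by omega⟩
  have hnz : ∀ᵐ ω ∂μ, ∀ k, β k ω ≠ 0 := ae_all_iff.2 fun k =>
    ae_ne_zero_of_measure_pos_add_measure_neg (hmeas k) (by rw [hpos, hneg, ENNReal.add_halves])
  let signs : Ω → Fin (n + 2) → Bool := fun ω k => decide (0 < β k ω)
  let S : Finset (Fin (n + 2) → Bool) :=
    {σ | m ≤ signChanges σ ∧ (Even (signChanges σ) ↔ Even m)}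
  have hsub : {ω | numInternalEquilibria (n + 2) (fun k => β k ω) = m} ≤ᵐ[μ] signs ⁻¹' S := by
    filter_upwards [hnz] with ω hω hN
    obtain ⟨hle, hparity⟩ := numInternalEquilibria_le_signChanges_and_even_iff hω
    rw [show numInternalEquilibria (n + 2) (fun k => β k ω) = m from hN] at hle hparity
    show signs ω ∈ S
    simp [S, signs, hle, hparity]
  calc μ {ω | numInternalEquilibria (n + 2) (fun k => β k ω) = m}
      ≤ μ (signs ⁻¹' S) := measure_mono_ae hsub
    _ ≤ ∑ σ ∈ S, μ (signs ⁻¹' {σ}) := by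
        rw [← Set.biUnion_preimage_singleton]
        exact measure_biUnion_finset_le S _
    _ = #S * 2⁻¹ ^ (n + 2) := by
        simp [Set.preimage, signs, measure_signPattern_eq hmeas hindep hpos]
    _ = _ := by
        rw [card_signChanges_ge_of_parity (by omega), ← ENNReal.inv_pow, ← div_eq_mul_inv]
        push_cast
        simp
end

section
/- Let d ≥ 2 and let β_0, …, β_{d−1} be independent real-valued random variables with P(β_k > 0) = P(β_k < 0) = 1/2 for every k. With p_m the probability that P(y) = Σ_{k=0}^{d−1} β_k·C(d−1,k)·y^k has exactly m roots in (0, ∞) counted with multiplicity, one has the lower bounds p_0 ≥ 1/2^{d−1} and p_1 ≥ (d−1)/2^{d−1}. -/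
/-!
Every sign pattern `s ∈ {±}^d` of `(β_k)` is an event of probability `2^{-d}` by independence,
distinct patterns are disjoint, and the positive binomial weights make the coefficients of `P`
carry the signs of the `β_k`. So it suffices to count the patterns that force the number of
positive roots. The two constant patterns give none. The `2(d-1)` patterns with a single sign
change, say at index `j ≥ 1` with `P(0) < 0`, give exactly one: a root exists since `P(0) < 0`
and the leading coefficient is positive; and the coefficients of `yP' - jP` are `(k - j) c_k ≥ 0`,
so `yP'(y) > jP(y)` for `y > 0`. Hence `P(y) y^{-j}` is strictly increasing on `(0, ∞)`, which
makes the root unique, and `P'` does not vanish there, which makes it simple.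
-/

open MeasureTheory ProbabilityTheory Polynomial

open scoped ENNReal

namespace Polynomial

variable {p : ℝ[X]}

theorem eval_pos_of_coeff_nonneg (hp : p ≠ 0) (h : ∀ k, 0 ≤ p.coeff k) {x : ℝ} (hx : 0 < x) :
    0 < p.eval x := by
  rw [eval_eq_sum_range]
  refine Finset.sum_pos' (fun k _ => mul_nonneg (h k) (pow_nonneg hx.le k))
    ⟨p.natDegree, Finset.self_mem_range_succ _, mul_pos ?_ (pow_pos hx _)⟩
  exact (h _).lt_of_ne' (leadingCoeff_ne_zero.mpr hp)

theorem card_filter_roots_pos_eq_zero_of_coeff_nonneg (h : ∀ k, 0 ≤ p.coeff k) :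
    (p.roots.filter (0 < ·)).card = 0 := by
  rcases eq_or_ne p 0 with rfl | hp
  · simp
  refine Multiset.card_eq_zero.mpr (Multiset.filter_eq_nil.mpr fun x hx hx0 => ?_)
  exact (eval_pos_of_coeff_nonneg hp h hx0).ne' (isRoot_of_mem_roots hx)

theorem exists_pos_isRoot_of_eval_zero_neg (h0 : p.eval 0 < 0) (hlead : 0 < p.leadingCoeff) :
    ∃ a, 0 < a ∧ p.IsRoot a := by
  have hdeg : 0 < p.degree := by
    refine degree_pos_of_ne_zero_of_nonunit (leadingCoeff_ne_zero.mp hlead.ne') fun hu => ?_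
    obtain ⟨c, -, rfl⟩ := isUnit_iff.mp hu
    simp only [eval_C, leadingCoeff_C] at h0 hlead
    exact h0.not_gt hlead
  obtain ⟨z, hz, hz0⟩ := ((p.tendsto_atTop_of_leadingCoeff_nonneg hdeg hlead.le).eventually_gt_atTop
    0 |>.and (Filter.eventually_gt_atTop 0)).exists
  obtain ⟨a, ha, hroot⟩ := intermediate_value_Ioo hz0.le p.continuous.continuousOn ⟨h0, hz⟩
  exact ⟨a, ha.1, hroot⟩

theorem natCast_mul_eval_lt_mul_eval_derivative_of_coeff_signChange {j : ℕ}
    (hlow : ∀ k < j, p.coeff k ≤ 0) (hhigh : ∀ k, j ≤ k → 0 ≤ p.coeff k) (h0 : p.coeff 0 < 0)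
    {x : ℝ} (hx : 0 < x) : j * p.eval x < x * p.derivative.eval x := by
  have hj : 0 < j := Nat.pos_of_ne_zero fun hj => (hhigh 0 hj.le).not_gt h0
  set r := X * derivative p - C (j : ℝ) * p
  have hcoeff : ∀ k, r.coeff k = ((k : ℝ) - j) * p.coeff k := by
    rintro (_ | k)
    · simp [r]
    · simp [r, coeff_X_mul, coeff_derivative]; ring
  have hr : ∀ k, 0 ≤ r.coeff k := fun k => by
    rw [hcoeff]
    rcases lt_or_ge k j with hk | hk
    · exact mul_nonneg_of_nonpos_of_nonpos (by simp [hk.le]) (hlow k hk)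
    · exact mul_nonneg (by simp [hk]) (hhigh k hk)
  have hr0 : r ≠ 0 := fun h => by
    have := hcoeff 0
    simp only [h, coeff_zero, Nat.cast_zero, zero_sub] at this
    nlinarith [show (0 : ℝ) < j by exact_mod_cast hj]
  have := eval_pos_of_coeff_nonneg hr0 hr hx
  simp only [r, eval_sub, eval_mul, eval_X, eval_C] at this
  linarith

theorem strictMonoOn_eval_mul_zpow_neg {j : ℕ}
    (hE : ∀ x, 0 < x → j * p.eval x < x * p.derivative.eval x) :
    StrictMonoOn (fun x => p.eval x * x ^ (-(j : ℤ))) (Set.Ioi 0) := by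
  have hderiv : ∀ x : ℝ, 0 < x → HasDerivAt (fun x => p.eval x * x ^ (-(j : ℤ)))
      (x ^ (-(j : ℤ) - 1) * (x * p.derivative.eval x - j * p.eval x)) x := fun x hx => by
    refine ((p.hasDerivAt x).mul (hasDerivAt_zpow _ x (Or.inl hx.ne'))).congr_deriv ?_
    rw [zpow_sub_one₀ hx.ne']
    field_simp
    push_cast
    ring
  refine strictMonoOn_of_deriv_pos (convex_Ioi 0) ?_ fun x hx => ?_
  · exact fun x hx => (hderiv x hx).continuousAt.continuousWithinAt
  · rw [interior_Ioi] at hx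
    rw [(hderiv x hx).deriv]
    exact mul_pos (zpow_pos hx _) (sub_pos.mpr (hE x hx))

theorem card_filter_roots_pos_eq_one {j : ℕ}
    (hE : ∀ x, 0 < x → j * p.eval x < x * p.derivative.eval x)
    {a : ℝ} (ha : 0 < a) (hroot : p.IsRoot a) :
    (p.roots.filter (0 < ·)).card = 1 := by
  have hp : p ≠ 0 := by rintro rfl; simpa using hE 1 one_pos
  have hunique : ∀ x ∈ p.roots.filter (0 < ·), a = x := fun x hx => by
    rw [Multiset.mem_filter, mem_roots hp] at hx
    refine strictMonoOn_eval_mul_zpow_neg hE |>.injOn ha hx.2 ?_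
    simp [hroot.eq_zero, hx.1.eq_zero]
  have hsimple : p.rootMultiplicity a = 1 := by
    have hpos := (rootMultiplicity_pos hp).mpr hroot
    have : ¬ 1 < p.rootMultiplicity a := fun h => by
      have hd := ((one_lt_rootMultiplicity_iff_isRoot hp).mp h).2.eq_zero
      simpa [hroot.eq_zero, hd] using hE a ha
    omega
  rw [← Multiset.count_eq_card.mpr hunique, Multiset.count_filter_of_pos ha, count_roots,
    hsimple]

theorem card_filter_roots_pos_eq_one_of_coeff_signChange {j : ℕ}
    (hlow : ∀ k < j, p.coeff k ≤ 0) (hhigh : ∀ k, j ≤ k → 0 ≤ p.coeff k) (h0 : p.coeff 0 < 0)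
    {i : ℕ} (hi : 0 < p.coeff i) :
    (p.roots.filter (0 < ·)).card = 1 := by
  have hji : j ≤ i := not_lt.mp fun h => (hlow i h).not_gt hi
  have hlead : 0 < p.leadingCoeff := by
    have hp : p ≠ 0 := by rintro rfl; simp at hi
    exact (hhigh _ (hji.trans (le_natDegree_of_ne_zero hi.ne'))).lt_of_ne'
      (leadingCoeff_ne_zero.mpr hp)
  obtain ⟨a, ha, hroot⟩ :=
    exists_pos_isRoot_of_eval_zero_neg (by rwa [← coeff_zero_eq_eval_zero]) hlead
  exact card_filter_roots_pos_eq_one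
    (fun _ hx => natCast_mul_eval_lt_mul_eval_derivative_of_coeff_signChange hlow hhigh h0 hx)
    ha hroot

end Polynomial

def signSet : Bool → Set ℝ
  | true => Set.Ioi 0
  | false => Set.Iio 0

def stepPattern {d : ℕ} (j : ℕ) (b : Bool) (k : Fin d) : Bool :=
  if (k : ℕ) < j then !b else b

theorem measurableSet_signSet (b : Bool) : MeasurableSet (signSet b) := by
  cases b
  exacts [measurableSet_Iio, measurableSet_Ioi]

theorem disjoint_signSet {b b' : Bool} (h : b ≠ b') : Disjoint (signSet b) (signSet b') := by
  cases b <;> cases b' <;> simp_all [signSet, Set.disjoint_left]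
  all_goals exact fun x hx => hx.le

theorem neg_mem_signSet_not {x : ℝ} {b : Bool} : -x ∈ signSet (!b) ↔ x ∈ signSet b := by
  cases b <;> simp [signSet]

theorem stepPattern_injOn {d : ℕ} :
    Set.InjOn (fun p : ℕ × Bool => (stepPattern p.1 p.2 : Fin d → Bool)) {p | p.1 < d} := by
  rintro ⟨j, b⟩ hj ⟨j', b'⟩ hj' h
  simp only [Set.mem_ofPred_eq] at hj hj'
  have hb : b = b' := by
    have hlast (i : ℕ) (hi : i < d) : ¬ d - 1 < i := not_lt.mpr (Nat.le_sub_one_of_lt hi)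
    simpa [stepPattern, hlast j hj, hlast j' hj'] using congrFun h ⟨d - 1, by omega⟩
  subst hb
  refine Prod.ext (le_antisymm ?_ ?_) rfl <;> by_contra! hlt
  · simpa [stepPattern, hlt] using congrFun h ⟨j', hj'⟩
  · simpa [stepPattern, hlt] using congrFun h ⟨j, hj⟩

noncomputable def equilibriumPoly (d : ℕ) (β : Fin d → ℝ) : ℝ[X] :=
  ∑ k : Fin d, C (β k * ((d - 1).choose (k : ℕ) : ℝ)) * X ^ (k : ℕ)

section equilibriumPoly

variable {d : ℕ} {β : Fin d → ℝ}

theorem numInternalEquilibria_eq_card_filter_roots :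
    numInternalEquilibria d β = ((equilibriumPoly d β).roots.filter (0 < ·)).card := rfl

theorem coeff_equilibriumPoly (n : ℕ) : (equilibriumPoly d β).coeff n =
    if h : n < d then β ⟨n, h⟩ * ((d - 1).choose n : ℝ) else 0 := by
  simp only [equilibriumPoly, finsetSum_coeff, coeff_C_mul_X_pow]
  split_ifs with h
  · rw [Finset.sum_eq_single ⟨n, h⟩ (fun k _ hk => if_neg fun e => hk (Fin.ext e.symm)) (by simp)]
    simp
  · exact Finset.sum_eq_zero fun k _ => if_neg (by omega)

theorem cast_choose_pred_pos (k : Fin d) : (0 : ℝ) < (d - 1).choose k :=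
  Nat.cast_pos.mpr (Nat.choose_pos (Nat.le_pred_of_lt k.isLt))

theorem equilibriumPoly_neg : equilibriumPoly d (-β) = -equilibriumPoly d β := by
  simp [equilibriumPoly, Finset.sum_neg_distrib]

theorem numInternalEquilibria_neg : numInternalEquilibria d (-β) = numInternalEquilibria d β := by
  simp only [numInternalEquilibria_eq_card_filter_roots, equilibriumPoly_neg, roots_neg]

theorem numInternalEquilibria_eq_zero_of_pos (h : ∀ k, 0 < β k) :
    numInternalEquilibria d β = 0 := by
  rw [numInternalEquilibria_eq_card_filter_roots]
  refine card_filter_roots_pos_eq_zero_of_coeff_nonneg fun n => ?_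
  rw [coeff_equilibriumPoly]
  split_ifs with hn
  exacts [(mul_pos (h _) (cast_choose_pred_pos ⟨n, hn⟩)).le, le_rfl]

theorem numInternalEquilibria_eq_one_of_signChange {j : ℕ} (hj : 0 < j) (hjd : j < d)
    (hlow : ∀ k : Fin d, (k : ℕ) < j → β k < 0) (hhigh : ∀ k : Fin d, j ≤ k → 0 < β k) :
    numInternalEquilibria d β = 1 := by
  rw [numInternalEquilibria_eq_card_filter_roots]
  refine card_filter_roots_pos_eq_one_of_coeff_signChange (j := j) (i := j)
    (fun n hn => ?_) (fun n hn => ?_) ?_ ?_ <;> rw [coeff_equilibriumPoly]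
  · split_ifs with hnd
    exacts [(mul_neg_of_neg_of_pos (hlow ⟨n, hnd⟩ hn) (cast_choose_pred_pos ⟨n, hnd⟩)).le, le_rfl]
  · split_ifs with hnd
    exacts [(mul_pos (hhigh ⟨n, hnd⟩ hn) (cast_choose_pred_pos ⟨n, hnd⟩)).le, le_rfl]
  · rw [dif_pos (hj.trans hjd)]
    exact mul_neg_of_neg_of_pos (hlow ⟨0, _⟩ hj) (cast_choose_pred_pos ⟨0, hj.trans hjd⟩)
  · rw [dif_pos hjd]
    exact mul_pos (hhigh ⟨j, hjd⟩ le_rfl) (cast_choose_pred_pos ⟨j, hjd⟩)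

theorem numInternalEquilibria_eq_zero_of_mem_signSet {b : Bool} (h : ∀ k, β k ∈ signSet b) :
    numInternalEquilibria d β = 0 := by
  cases b
  · rw [← numInternalEquilibria_neg]
    exact numInternalEquilibria_eq_zero_of_pos fun k => neg_mem_signSet_not.mpr (h k)
  · exact numInternalEquilibria_eq_zero_of_pos h

theorem numInternalEquilibria_eq_one_of_mem_signSet_stepPattern {j : ℕ} (hj : 0 < j)
    (hjd : j < d) {b : Bool} (h : ∀ k, β k ∈ signSet (stepPattern j b k)) :
    numInternalEquilibria d β = 1 := by
  cases b
  · rw [← numInternalEquilibria_neg]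
    refine numInternalEquilibria_eq_one_of_signChange hj hjd (fun k hk => ?_) (fun k hk => ?_)
    · simpa [signSet, stepPattern, hk] using h k
    · simpa [signSet, stepPattern, hk.not_gt] using h k
  · refine numInternalEquilibria_eq_one_of_signChange hj hjd (fun k hk => ?_) (fun k hk => ?_)
    · simpa [signSet, stepPattern, hk] using h k
    · simpa [signSet, stepPattern, hk.not_gt] using h k

end equilibriumPoly

section signPatterns

variable {Ω ι : Type*} [MeasurableSpace Ω] {μ : Measure Ω} [Fintype ι] {β : ι → Ω → ℝ}

theorem measure_iInter_preimage_signSet (hindep : iIndepFun β μ)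
    (hpos : ∀ k, μ {ω | 0 < β k ω} = 1 / 2) (hneg : ∀ k, μ {ω | β k ω < 0} = 1 / 2)
    (s : ι → Bool) : μ (⋂ k, β k ⁻¹' signSet (s k)) = 2⁻¹ ^ Fintype.card ι := by
  have hk : ∀ k, μ (β k ⁻¹' signSet (s k)) = 2⁻¹ := fun k => by
    cases s k
    exacts [(hneg k).trans (one_div 2), (hpos k).trans (one_div 2)]
  simpa [hk] using
    hindep.measure_inter_preimage_eq_mul Finset.univ fun k _ => measurableSet_signSet (s k)

theorem card_div_two_pow_le_measure (hmeas : ∀ k, Measurable (β k)) (hindep : iIndepFun β μ)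
    (hpos : ∀ k, μ {ω | 0 < β k ω} = 1 / 2) (hneg : ∀ k, μ {ω | β k ω < 0} = 1 / 2)
    (T : Finset (ι → Bool)) {A : Set Ω} (hT : ∀ s ∈ T, ⋂ k, β k ⁻¹' signSet (s k) ⊆ A) :
    (T.card : ℝ≥0∞) / 2 ^ Fintype.card ι ≤ μ A := by
  have hdisj : (T : Set (ι → Bool)).PairwiseDisjoint fun s => ⋂ k, β k ⁻¹' signSet (s k) := by
    intro s _ t _ hst
    obtain ⟨k, hk⟩ := Function.ne_iff.mp hst
    exact ((disjoint_signSet hk).preimage (β k)).mono (Set.iInter_subset _ k)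
      (Set.iInter_subset _ k)
  calc (T.card : ℝ≥0∞) / 2 ^ Fintype.card ι
      = ∑ s ∈ T, μ (⋂ k, β k ⁻¹' signSet (s k)) := by
        simp [measure_iInter_preimage_signSet hindep hpos hneg, div_eq_mul_inv, ENNReal.inv_pow]
    _ = μ (⋃ s ∈ T, ⋂ k, β k ⁻¹' signSet (s k)) :=
        (measure_biUnion_finset hdisj fun s _ =>
          .iInter fun k => hmeas k (measurableSet_signSet (s k))).symm
    _ ≤ μ A := measure_mono (Set.iUnion₂_subset hT)

end signPatterns

theorem ENNReal.mul_two_div_two_pow_succ (a : ℝ≥0∞) (e : ℕ) : a * 2 / 2 ^ (e + 1) = a / 2 ^ e := by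
  rw [pow_succ, ENNReal.mul_div_mul_right _ _ two_ne_zero ENNReal.ofNat_ne_top]

theorem prob_internalEquilibria_lower_bounds_general
    {Ω : Type*} [MeasurableSpace Ω] (μ : Measure Ω)
    (d : ℕ) (β : Fin d → Ω → ℝ)
    (hmeas : ∀ k, Measurable (β k))
    (hindep : iIndepFun β μ)
    (hpos : ∀ k, μ {ω | 0 < β k ω} = 1 / 2)
    (hneg : ∀ k, μ {ω | β k ω < 0} = 1 / 2) :
    1 / 2 ^ (d - 1) ≤ μ {ω | numInternalEquilibria d (fun k => β k ω) = 0} ∧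
    ((d - 1 : ℕ) : ENNReal) / 2 ^ (d - 1) ≤
      μ {ω | numInternalEquilibria d (fun k => β k ω) = 1} := by
  have key := Fintype.card_fin d ▸ card_div_two_pow_le_measure hmeas hindep hpos hneg
  set constPatterns : Finset (Fin d → Bool) := Finset.univ.image fun b _ => b
  set stepPatterns : Finset (Fin d → Bool) :=
    (Finset.Ico 1 d ×ˢ Finset.univ).image fun p => stepPattern p.1 p.2
  have hconst : 1 / 2 ^ (d - 1) ≤ (constPatterns.card : ℝ≥0∞) / 2 ^ d := by
    rcases d with _ | e
    · simp [constPatterns]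
    · rw [Finset.card_image_of_injective _ fun b b' h => congrFun h 0]
      simp [← ENNReal.mul_two_div_two_pow_succ 1 e]
  have hstep : ((d - 1 : ℕ) : ℝ≥0∞) / 2 ^ (d - 1) ≤ (stepPatterns.card : ℝ≥0∞) / 2 ^ d := by
    rw [Finset.card_image_of_injOn (stepPattern_injOn.mono fun p hp => ?_)]
    · rcases d with _ | e
      · simp
      · simp [← ENNReal.mul_two_div_two_pow_succ (e : ℝ≥0∞) e]
    · simp only [Finset.coe_product, Finset.coe_Ico, Set.mem_prod] at hp
      exact hp.1.2
  refine ⟨hconst.trans (key _ ?_), hstep.trans (key _ ?_)⟩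
  · simp only [constPatterns, Finset.mem_image]
    rintro _ ⟨b, -, rfl⟩ ω hω
    exact numInternalEquilibria_eq_zero_of_mem_signSet (Set.mem_iInter.mp hω)
  · simp only [stepPatterns, Finset.mem_image, Finset.mem_product, Finset.mem_Ico]
    rintro _ ⟨⟨j, b⟩, ⟨⟨hj, hjd⟩, -⟩, rfl⟩ ω hω
    exact numInternalEquilibria_eq_one_of_mem_signSet_stepPattern hj hjd (Set.mem_iInter.mp hω)

/-- For a `d`-player two-strategy random evolutionary game with symmetric payoff
difference signs (`P(β_k > 0) = P(β_k < 0) = 1/2`), one has the lower bounds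
`p_0 ≥ 1/2^{d−1}` and `p_1 ≥ (d−1)/2^{d−1}`. -/
theorem prob_internalEquilibria_lower_bounds
    {Ω : Type*} [MeasurableSpace Ω] (μ : Measure Ω) [IsProbabilityMeasure μ]
    (d : ℕ) (hd : 2 ≤ d) (β : Fin d → Ω → ℝ)
    (hmeas : ∀ k, Measurable (β k))
    (hindep : iIndepFun β μ)
    (hpos : ∀ k, μ {ω | 0 < β k ω} = 1 / 2)
    (hneg : ∀ k, μ {ω | β k ω < 0} = 1 / 2) :
    1 / 2 ^ (d - 1) ≤ μ {ω | numInternalEquilibria d (fun k => β k ω) = 0} ∧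
    ((d - 1 : ℕ) : ENNReal) / 2 ^ (d - 1) ≤
      μ {ω | numInternalEquilibria d (fun k => β k ω) = 1} :=
  prob_internalEquilibria_lower_bounds_general μ d β hmeas hindep hpos hneg
end

section
/- Let d ≥ 2, α ∈ [0,1], and let β_0, …, β_{d−1} be independent real-valued random variables with P(β_k > 0) = α and P(β_k < 0) = 1 − α for every k. With p_m the probability that P(y) = Σ_{k=0}^{d−1} β_k·C(d−1,k)·y^k has exactly m roots in (0, ∞) counted with multiplicity, one has: (i) p_{d−1} ≤ (α(1−α))^{(d−1)/2} if d is odd and p_{d−1} ≤ 2·(α(1−α))^{d/2} if d is even, and in both cases p_{d−1} ≤ 1/2^{d−1}; (ii) if d ≥ 3 is odd, then p_{d−2} ≤ (d−1)·(α(1−α))^{(d−1)/2}; and (iii) if d ≥ 3, then p_{d−2} ≤ (d−1)/2^{d−1}. -/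
/-!
By Descartes' rule of signs, `P` has at most as many positive roots as its coefficient sequence
has sign changes, and the coefficients have the signs of the `β_k`, which are almost surely
nonzero. So `d - 1` positive roots force the signs to alternate. With `d - 2` positive roots, `P`
is the product of the factors `X - r` over them and a linear factor with a negative root; this
gives `β_0 β_{d-1}` the sign opposite to the alternating one, so exactly one pair of consecutive
signs agrees. By independence a sign pattern with `a` positive and `b` negative signs has
probability `α^a (1-α)^b`; summing over the two alternating patterns, resp. the `2 (d - 1)`
patterns with one agreement, and using `α (1 - α) ≤ 1/4` gives the bounds.
-/

open MeasureTheory ProbabilityTheory Polynomial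

open Finset

section SignChanges
variable {R : Type*} [CommRing R] [LinearOrder R] [IsStrictOrderedRing R]

theorem neg_one_pow_card_sign_changes_mul_mul_pos {g : ℕ → R} {n : ℕ} (hg : ∀ k ≤ n, g k ≠ 0) :
    0 < (-1) ^ #{k ∈ range n | g k * g (k + 1) < 0} * g 0 * g n := by
  induction n with
  | zero => simpa [mul_self_pos] using hg 0 le_rfl
  | succ n ih =>
    have hstep : 0 < (-1) ^ (if g n * g (n + 1) < 0 then 1 else 0) * (g n * g (n + 1)) := by
      split_ifs with h
      · simpa using h
      · simpa using (not_lt.mp h).lt_of_ne' (mul_ne_zero (hg n (by omega)) (hg (n + 1) le_rfl))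
    refine (mul_pos_iff_of_pos_right (sq_pos_of_ne_zero (hg n (by omega)))).mp ?_
    rw [card_filter, sum_range_succ, ← card_filter, pow_add]
    convert mul_pos (ih fun k hk => hg k (by omega)) hstep using 1
    ring

theorem pos_iff_of_neg_one_pow_mul_mul_pos {a b : R} {m : ℕ} (h : 0 < (-1) ^ m * a * b) :
    0 < b ↔ (0 < a ↔ Even m) := by
  rcases Nat.even_or_odd m with hm | hm
  · rw [hm.neg_one_pow, one_mul] at h
    rcases mul_pos_iff.mp h with ⟨ha, hb⟩ | ⟨ha, hb⟩
    · simp [ha, hb, hm]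
    · simp [ha.not_gt, hb.not_gt, hm]
  · rw [hm.neg_one_pow, neg_one_mul, neg_mul, neg_pos] at h
    rcases mul_neg_iff.mp h with ⟨ha, hb⟩ | ⟨ha, hb⟩
    · simp [ha, hb.not_gt, Nat.not_even_iff_odd.mpr hm]
    · simp [ha.not_gt, hb, Nat.not_even_iff_odd.mpr hm]

end SignChanges

namespace Polynomial
variable {R : Type*} [CommRing R] [LinearOrder R] [IsStrictOrderedRing R]

private theorem sign_eq_neg_sign_iff_mul_neg {a b : R} (ha : a ≠ 0) (hb : b ≠ 0) :
    SignType.sign b = -SignType.sign a ↔ a * b < 0 := by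
  rw [← sign_eq_neg_one_iff, sign_mul]
  rcases ha.lt_or_gt with ha | ha <;> rcases hb.lt_or_gt with hb | hb <;>
    simp [sign_neg, sign_pos, ha, hb]

theorem signVariations_eq_card_of_coeff_ne_zero {P : R[X]}
    (h : ∀ k ≤ P.natDegree, P.coeff k ≠ 0) :
    P.signVariations = #{k ∈ range P.natDegree | P.coeff k * P.coeff (k + 1) < 0} := by
  induction hn : P.natDegree generalizing P with
  | zero =>
    rw [eq_C_of_natDegree_eq_zero hn, ← monomial_zero_left, signVariations_monomial]
    rfl
  | succ n ih =>
    have hP : P ≠ 0 := fun h0 => h 0 (by omega) (by simp [h0])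
    have hcoeff : ∀ k ≤ n, P.eraseLead.coeff k = P.coeff k := fun k hk =>
      eraseLead_coeff_of_ne k (by omega)
    have hdeg : P.eraseLead.natDegree = n :=
      le_antisymm ((eraseLead_natDegree_le P).trans (by omega))
        (le_natDegree_of_ne_zero (by rw [hcoeff n le_rfl]; exact h n (by omega)))
    have hlead : P.eraseLead.leadingCoeff = P.coeff n := by
      rw [leadingCoeff, hdeg, hcoeff n le_rfl]
    rw [signVariations_eq_eraseLead_add_ite hP, ih (fun k hk => ?_) hdeg, hlead, leadingCoeff, hn]
    simp only [sign_eq_neg_sign_iff_mul_neg (h n (by omega)) (h (n + 1) hn.ge)]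
    rw [range_add_one, filter_insert, filter_congr fun k hk => by
        rw [hcoeff k (by simp at hk; omega), hcoeff (k + 1) (by simp at hk; omega)]]
    · split_ifs <;> simp [card_insert_of_notMem]
    · rw [hcoeff k (by omega)]; exact h k (by omega)

theorem coeff_mul_coeff_succ_neg_of_countP_roots_pos_eq_natDegree {P : R[X]}
    (h : ∀ k ≤ P.natDegree, P.coeff k ≠ 0) (hroots : P.roots.countP (0 < ·) = P.natDegree) :
    ∀ k < P.natDegree, P.coeff k * P.coeff (k + 1) < 0 := by
  have := P.roots_countP_pos_le_signVariations
  rw [hroots, signVariations_eq_card_of_coeff_ne_zero h] at this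
  have := card_filter_eq_iff.mp (le_antisymm (card_filter_le _ _) (by rwa [card_range]))
  simpa using this

variable {K : Type*} [Field K] [LinearOrder K] [IsStrictOrderedRing K]

theorem coeff_zero_mul_coeff_one_pos_of_roots_nonpos {L : K[X]} (hL : L.natDegree = 1)
    (h0 : L.coeff 0 ≠ 0) (hroots : ∀ r ∈ L.roots, r ≤ 0) : 0 < L.coeff 0 * L.coeff 1 := by
  have hL0 : L ≠ 0 := by rintro rfl; simp at hL
  obtain ⟨r, hr⟩ := exists_root_of_degree_eq_one ((degree_eq_iff_natDegree_eq hL0).mpr hL)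
  have hr0 : r ≤ 0 := hroots r ((mem_roots hL0).mpr hr)
  rw [IsRoot, eq_X_add_C_of_natDegree_le_one hL.le] at hr
  simp only [eval_add, eval_mul, eval_C, eval_X] at hr
  have h1 : L.coeff 1 ≠ 0 := by rw [← hL]; exact leadingCoeff_ne_zero.mpr hL0
  rw [show L.coeff 0 = -(L.coeff 1 * r) by linear_combination hr] at h0 ⊢
  have hr' : r < 0 := hr0.lt_of_ne (by rintro rfl; simp at h0)
  nlinarith [sq_pos_of_ne_zero h1]

theorem neg_one_pow_natDegree_mul_coeff_zero_mul_leadingCoeff_neg {P : K[X]}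
    (h0 : P.coeff 0 ≠ 0) (hroots : P.roots.countP (0 < ·) + 1 = P.natDegree) :
    (-1) ^ P.natDegree * P.coeff 0 * P.leadingCoeff < 0 := by
  have hP : P ≠ 0 := fun h => h0 (by simp [h])
  set S := P.roots.filter (0 < ·) with hS
  have hSpos : ∀ a ∈ S, 0 < a := fun a ha => (Multiset.mem_filter.mp ha).2
  have hQ : (S.map fun a => X - C a).prod.Monic :=
    monic_multiset_prod_of_monic _ _ fun a _ => monic_X_sub_C a
  -- `P = Q * L` with `Q` the product over the positive roots: `L` is linear without positive roots
  obtain ⟨L, hPL⟩ := (Multiset.prod_X_sub_C_dvd_iff_le_roots hP S).mpr (Multiset.filter_le _ _)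
  have hL : L ≠ 0 := by rintro rfl; exact hP (by simp [hPL])
  have hdeg := natDegree_mul hQ.ne_zero hL
  rw [← hPL, natDegree_multiset_prod_X_sub_C_eq_card] at hdeg
  have hLdeg : L.natDegree = 1 := by
    rw [← hroots, Multiset.countP_eq_card_filter, ← hS] at hdeg
    omega
  have hLroots : ∀ r ∈ L.roots, r ≤ 0 := by
    have := congrArg (Multiset.countP (0 < ·)) (roots_mul (hPL ▸ hP))
    rw [← hPL, roots_multiset_prod_X_sub_C, Multiset.countP_add,
      Multiset.countP_eq_card_filter, ← hS, Multiset.countP_eq_card.mpr hSpos] at this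
    have hL0 : L.roots.countP (fun x => 0 < x) = 0 := by omega
    exact fun r hr => not_lt.mp (Multiset.countP_eq_zero.mp hL0 r hr)
  have hQ0 : (S.map fun a => X - C a).prod.coeff 0 = (-1) ^ Multiset.card S * S.prod := by
    rw [coeff_zero_eq_eval_zero, eval_multiset_prod]
    simp [Multiset.prod_map_neg]
  have hc0 : P.coeff 0 = (-1) ^ Multiset.card S * S.prod * L.coeff 0 := by
    rw [hPL, mul_coeff_zero, hQ0]
  have hlc : P.leadingCoeff = L.coeff 1 := by
    rw [hPL, leadingCoeff_mul, hQ.leadingCoeff, one_mul, leadingCoeff, hLdeg]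
  have hL01 := coeff_zero_mul_coeff_one_pos_of_roots_nonpos hLdeg
    (fun h => h0 (by rw [hc0, h, mul_zero])) hLroots
  calc (-1) ^ P.natDegree * P.coeff 0 * P.leadingCoeff
      = -(((-1) ^ Multiset.card S) ^ 2 * S.prod * (L.coeff 0 * L.coeff 1)) := by
        rw [hdeg, hLdeg, hc0, hlc]; ring
    _ < 0 := by
        rw [← pow_mul, pow_mul', neg_one_sq, one_pow, one_mul, neg_lt_zero]
        exact mul_pos (Multiset.prod_pos hSpos) hL01

theorem exists_coeff_mul_coeff_succ_neg_iff_ne_of_countP_roots_pos_add_one_eq_natDegree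
    {P : K[X]} (h : ∀ k ≤ P.natDegree, P.coeff k ≠ 0)
    (hroots : P.roots.countP (0 < ·) + 1 = P.natDegree) :
    ∃ j < P.natDegree, ∀ k < P.natDegree, (P.coeff k * P.coeff (k + 1) < 0 ↔ k ≠ j) := by
  have hV := P.roots_countP_pos_le_signVariations
  rw [signVariations_eq_card_of_coeff_ne_zero h] at hV
  have hsplit := card_filter_add_card_filter_not (s := range P.natDegree)
    (fun k => P.coeff k * P.coeff (k + 1) < 0)
  rw [card_range] at hsplit
  obtain ⟨j, hj⟩ : ∃ j, {k ∈ range P.natDegree | ¬P.coeff k * P.coeff (k + 1) < 0} = {j} := by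
    refine card_eq_one.mp (le_antisymm (by omega) (one_le_card.mpr ?_))
    by_contra hempty
    rw [not_nonempty_iff_eq_empty] at hempty
    have hall : #{k ∈ range P.natDegree | P.coeff k * P.coeff (k + 1) < 0} = P.natDegree := by
      rw [hempty, card_empty] at hsplit; omega
    have := neg_one_pow_card_sign_changes_mul_mul_pos (g := P.coeff) h
    rw [hall] at this
    exact (neg_one_pow_natDegree_mul_coeff_zero_mul_leadingCoeff_neg (h 0 (Nat.zero_le _))
      hroots).not_gt this
  have hmem : ∀ k, (k < P.natDegree ∧ ¬P.coeff k * P.coeff (k + 1) < 0) ↔ k = j := fun k => by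
    simpa using congrArg (k ∈ ·) hj
  refine ⟨j, ((hmem j).mpr rfl).1, fun k hk => ?_⟩
  simpa [hk] using (hmem k).not

end Polynomial

noncomputable def gamePolynomial (d : ℕ) (β : Fin d → ℝ) : ℝ[X] :=
  ∑ k : Fin d, C (β k * ((d - 1).choose (k : ℕ) : ℝ)) * X ^ (k : ℕ)

section GamePolynomial
variable {d : ℕ} {β : Fin d → ℝ}

theorem countP_roots_gamePolynomial :
    (gamePolynomial d β).roots.countP (0 < ·) = numInternalEquilibria d β :=
  Multiset.countP_eq_card_filter _ _

theorem coeff_gamePolynomial (k : Fin d) :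
    (gamePolynomial d β).coeff k = β k * (d - 1).choose k := by
  simp only [gamePolynomial, finsetSum_coeff, coeff_C_mul_X_pow, Fin.val_inj]
  rw [sum_ite_eq, if_pos (mem_univ k)]

theorem coeff_gamePolynomial_of_le {k : ℕ} (hk : d ≤ k) : (gamePolynomial d β).coeff k = 0 := by
  simp only [gamePolynomial, finsetSum_coeff, coeff_C_mul_X_pow]
  exact sum_eq_zero fun i _ => if_neg (by omega)

theorem coeff_gamePolynomial_pos_iff (k : Fin d) : 0 < (gamePolynomial d β).coeff k ↔ 0 < β k := by
  rw [coeff_gamePolynomial]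
  exact mul_pos_iff_of_pos_right (by exact_mod_cast Nat.choose_pos (by omega))

theorem coeff_gamePolynomial_ne_zero (hβ : ∀ k, β k ≠ 0) {k : ℕ} (hk : k < d) :
    (gamePolynomial d β).coeff k ≠ 0 := by
  rw [show k = ((⟨k, hk⟩ : Fin d) : ℕ) from rfl, coeff_gamePolynomial]
  exact mul_ne_zero (hβ _) (by exact_mod_cast (Nat.choose_pos (by omega)).ne')

theorem natDegree_gamePolynomial (hβ : ∀ k, β k ≠ 0) (hd : 0 < d) :
    (gamePolynomial d β).natDegree = d - 1 :=
  le_antisymm (natDegree_le_iff_coeff_eq_zero.mpr fun k hk => coeff_gamePolynomial_of_le (by omega))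
    (le_natDegree_of_ne_zero (coeff_gamePolynomial_ne_zero hβ (by omega)))

theorem sign_pattern_of_gamePolynomial_sign_changes (hβ : ∀ k, β k ≠ 0) {p : ℕ → Prop}
    [DecidablePred p]
    (hp : ∀ i, i + 1 < d →
      ((gamePolynomial d β).coeff i * (gamePolynomial d β).coeff (i + 1) < 0 ↔ p i)) :
    (∀ k : Fin d, 0 < β k ↔ Even #{i ∈ range k | p i}) ∨
      (∀ k : Fin d, 0 < β k ↔ ¬Even #{i ∈ range k | p i}) := by
  rcases Nat.eq_zero_or_pos d with rfl | hd
  · exact Or.inl fun k => k.elim0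
  have key : ∀ k : Fin d, 0 < β k ↔ (0 < β ⟨0, hd⟩ ↔ Even #{i ∈ range k | p i}) := fun k => by
    have := neg_one_pow_card_sign_changes_mul_mul_pos (g := (gamePolynomial d β).coeff) (n := k)
      fun i hi => coeff_gamePolynomial_ne_zero hβ (by omega)
    rw [filter_congr fun i hi => hp i (by simp at hi; omega)] at this
    rw [← coeff_gamePolynomial_pos_iff, ← coeff_gamePolynomial_pos_iff ⟨0, hd⟩]
    exact pos_iff_of_neg_one_pow_mul_mul_pos this
  by_cases h0 : 0 < β ⟨0, hd⟩
  · exact Or.inl fun k => by simpa [h0] using key k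
  · exact Or.inr fun k => by simpa [h0] using key k

theorem sign_pattern_of_numInternalEquilibria_eq_sub_one (hβ : ∀ k, β k ≠ 0) (hd : 0 < d)
    (h : numInternalEquilibria d β = d - 1) :
    (∀ k : Fin d, 0 < β k ↔ Even (k : ℕ)) ∨ (∀ k : Fin d, 0 < β k ↔ ¬Even (k : ℕ)) := by
  have hdeg := natDegree_gamePolynomial hβ hd
  have halt := coeff_mul_coeff_succ_neg_of_countP_roots_pos_eq_natDegree
    (fun k hk => coeff_gamePolynomial_ne_zero hβ (by omega))
    (by rw [countP_roots_gamePolynomial, h, hdeg])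
  simpa using sign_pattern_of_gamePolynomial_sign_changes hβ (p := fun _ => True)
    fun i hi => iff_true_intro (halt i (by omega))

theorem exists_sign_pattern_of_numInternalEquilibria_eq_sub_two (hβ : ∀ k, β k ≠ 0)
    (hd : 2 ≤ d) (h : numInternalEquilibria d β = d - 2) :
    ∃ j < d - 1, (∀ k : Fin d, 0 < β k ↔ (Even (k : ℕ) ↔ (k : ℕ) ≤ j)) ∨
      (∀ k : Fin d, 0 < β k ↔ ¬(Even (k : ℕ) ↔ (k : ℕ) ≤ j)) := by
  have hdeg := natDegree_gamePolynomial hβ (by omega)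
  obtain ⟨j, hj, hchg⟩ :=
    exists_coeff_mul_coeff_succ_neg_iff_ne_of_countP_roots_pos_add_one_eq_natDegree
      (fun k hk => coeff_gamePolynomial_ne_zero hβ (by omega))
      (by rw [countP_roots_gamePolynomial, h, hdeg]; omega)
  rw [hdeg] at hj hchg
  have hpar : ∀ k : ℕ, Even #{i ∈ range k | i ≠ j} ↔ (Even k ↔ k ≤ j) := fun k => by
    rw [filter_ne', card_erase_eq_ite, card_range]
    split_ifs with hjk <;> rw [mem_range] at hjk
    · rw [Nat.even_sub (by omega), iff_false_intro Nat.not_even_one,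
        iff_false_intro (by omega : ¬k ≤ j)]
    · rw [iff_true_intro (by omega : k ≤ j), iff_true]
  exact ⟨j, hj, by simpa only [hpar] using
    sign_pattern_of_gamePolynomial_sign_changes hβ (p := (· ≠ j)) fun i hi => hchg i (by omega)⟩

end GamePolynomial

theorem card_filter_range_even (n : ℕ) : #{k ∈ range n | Even k} = (n + 1) / 2 := by
  induction n with
  | zero => rfl
  | succ n ih =>
    rw [range_add_one, filter_insert]
    split_ifs
    · rw [card_insert_of_notMem (by simp), ih]
      grind
    · rw [ih]
      grind

theorem card_filter_range_even_iff_le {j n : ℕ} (hj : j < n) :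
    #{k ∈ range n | (Even k ↔ k ≤ j)} = n / 2 + if Even j then 1 else 0 := by
  induction n, hj using Nat.le_induction with
  | base =>
    have : ∀ k ∈ range (j + 1), ((Even k ↔ k ≤ j) ↔ Even k) := fun k hk => by
      simp [Nat.lt_succ_iff.mp (mem_range.mp hk)]
    rw [filter_congr this, card_filter_range_even]
    split_ifs <;> grind
  | succ n _ ih =>
    rw [range_add_one, filter_insert]
    simp only [show ¬n ≤ j by omega, iff_false]
    rw [apply_ite card, card_insert_of_notMem (by simp), ih]
    split_ifs <;> grind

/-- The probability of a fixed sign pattern with `a` positive and `b` negative signs, plus that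
of the opposite pattern, when each sign is independently positive with probability `α`. -/
noncomputable def patternProb (α : ℝ) (a b : ℕ) : ℝ :=
  α ^ a * (1 - α) ^ b + α ^ b * (1 - α) ^ a

section PatternProb
variable {α : ℝ}

theorem patternProb_nonneg (hα : α ∈ Set.Icc (0 : ℝ) 1) (a b : ℕ) : 0 ≤ patternProb α a b := by
  have := hα.1
  have : 0 ≤ 1 - α := by linarith [hα.2]
  unfold patternProb; positivity

theorem patternProb_comm (a b : ℕ) : patternProb α a b = patternProb α b a := add_comm _ _

theorem patternProb_succ_self (t : ℕ) : patternProb α (t + 1) t = (α * (1 - α)) ^ t := by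
  unfold patternProb; rw [mul_pow]; ring

theorem patternProb_of_add_eq_two_mul_add_one {a b t : ℕ} (h : a + b = 2 * t + 1)
    (hab : a ≤ b + 1) (hba : b ≤ a + 1) : patternProb α a b = (α * (1 - α)) ^ t := by
  obtain ⟨ha, hb⟩ | ⟨ha, hb⟩ : a = t + 1 ∧ b = t ∨ a = t ∧ b = t + 1 := by omega
  · rw [ha, hb, patternProb_succ_self]
  · rw [ha, hb, patternProb_comm, patternProb_succ_self]

theorem patternProb_self (t : ℕ) : patternProb α t t = 2 * (α * (1 - α)) ^ t := by
  unfold patternProb; rw [mul_pow]; ring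

theorem patternProb_add_two_self (t : ℕ) :
    patternProb α (t + 2) t = (α * (1 - α)) ^ t * (1 - 2 * (α * (1 - α))) := by
  unfold patternProb; rw [mul_pow]; ring

theorem patternProb_le_inv_two_pow (hα : α ∈ Set.Icc (0 : ℝ) 1) {a b n : ℕ} (hn : a + b = n)
    (ha : 1 ≤ a) (hb : 1 ≤ b) (hab : a ≤ b + 2) (hba : b ≤ a + 2) :
    patternProb α a b ≤ 1 / 2 ^ (n - 1) := by
  subst hn
  wlog h : b ≤ a generalizing a b
  · rw [patternProb_comm, add_comm]; exact this hb ha hba hab (by omega)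
  have hu : 0 ≤ α * (1 - α) := mul_nonneg hα.1 (by linarith [hα.2])
  have hu4 : α * (1 - α) ≤ 1 / 4 := by nlinarith [sq_nonneg (2 * α - 1)]
  have hpow : ∀ c, (α * (1 - α)) ^ c ≤ 1 / 2 ^ (2 * c) := fun c =>
    (pow_le_pow_left₀ hu hu4 c).trans_eq (by rw [pow_mul, one_div_pow]; norm_num)
  obtain ⟨c, rfl⟩ : ∃ c, b = c + 1 := ⟨b - 1, by omega⟩
  obtain rfl | rfl | rfl : a = c + 1 ∨ a = c + 2 ∨ a = c + 3 := by omega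
  · rw [patternProb_self, show c + 1 + (c + 1) - 1 = 2 * c + 1 by omega]
    calc 2 * (α * (1 - α)) ^ (c + 1) ≤ 2 * (1 / 2 ^ (2 * (c + 1))) := by grw [hpow]
      _ = 1 / 2 ^ (2 * c + 1) := by
        rw [show 2 * (c + 1) = 2 * c + 1 + 1 by ring, pow_succ]; field_simp
  · rw [patternProb_succ_self, show c + 2 + (c + 1) - 1 = 2 * (c + 1) by omega]
    exact hpow _
  · rw [patternProb_add_two_self, show c + 3 + (c + 1) - 1 = 2 * c + 3 by omega]
    have h8 : α * (1 - α) * (1 - 2 * (α * (1 - α))) ≤ 1 / 8 := by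
      nlinarith [sq_nonneg (4 * (α * (1 - α)) - 1)]
    calc (α * (1 - α)) ^ (c + 1) * (1 - 2 * (α * (1 - α)))
        = (α * (1 - α)) ^ c * (α * (1 - α) * (1 - 2 * (α * (1 - α)))) := by ring
      _ ≤ 1 / 2 ^ (2 * c) * (1 / 8) :=
        mul_le_mul (hpow c) h8 (mul_nonneg hu (by linarith)) (by positivity)
      _ = 1 / 2 ^ (2 * c + 3) := by rw [pow_add]; norm_num; ring

end PatternProb

section SignPatternEvent
variable {Ω : Type*} {d : ℕ} {β : Fin d → Ω → ℝ}

def signPatternEvent (β : Fin d → Ω → ℝ) (s : ℕ → Prop) [DecidablePred s] : Set Ω :=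
  {ω | ∀ k : Fin d, β k ω ∈ if s k then Set.Ioi 0 else Set.Iio 0}

theorem mem_signPatternEvent {s : ℕ → Prop} [DecidablePred s] {ω : Ω} (hβ : ∀ k, β k ω ≠ 0)
    (hs : ∀ k : Fin d, 0 < β k ω ↔ s k) : ω ∈ signPatternEvent β s := fun k => by
  split_ifs with hk
  exacts [(hs k).mpr hk, (not_lt.mp fun h => hk ((hs k).mp h)).lt_of_ne (hβ k)]

end SignPatternEvent

section Probability
variable {Ω : Type*} [MeasurableSpace Ω] {μ : Measure Ω}

theorem measure_eq_zero_of_measure_pos_add_measure_neg [IsProbabilityMeasure μ] {X : Ω → ℝ}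
    (hX : Measurable X) (h : μ {ω | 0 < X ω} + μ {ω | X ω < 0} = 1) :
    μ {ω | X ω = 0} = 0 := by
  have hpos : MeasurableSet {ω | 0 < X ω} := measurableSet_lt measurable_const hX
  have hneg : MeasurableSet {ω | X ω < 0} := measurableSet_lt hX measurable_const
  have hdisj : Disjoint {ω | 0 < X ω} {ω | X ω < 0} :=
    Set.disjoint_left.mpr fun ω (h1 : 0 < X ω) (h2 : X ω < 0) => lt_asymm h1 h2
  have hsub : {ω | X ω = 0} ⊆ ({ω | 0 < X ω} ∪ {ω | X ω < 0})ᶜ := fun ω (hω : X ω = 0) => by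
    simp [hω]
  refine measure_mono_null hsub ?_
  rw [prob_compl_eq_one_sub (hpos.union hneg), measure_union hdisj hneg, h, tsub_self]

variable {d : ℕ} {β : Fin d → Ω → ℝ} {α : ℝ}

theorem measure_signPatternEvent (hindep : iIndepFun β μ)
    (hpos : ∀ k, μ {ω | 0 < β k ω} = ENNReal.ofReal α)
    (hneg : ∀ k, μ {ω | β k ω < 0} = ENNReal.ofReal (1 - α)) (hα : α ∈ Set.Icc (0 : ℝ) 1)
    (s : ℕ → Prop) [DecidablePred s] :
    μ (signPatternEvent β s) =
      ENNReal.ofReal (α ^ #{k ∈ range d | s k} * (1 - α) ^ #{k ∈ range d | ¬s k}) := by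
  have hfactor : ∀ k : Fin d, μ (β k ⁻¹' if s k then Set.Ioi 0 else Set.Iio 0) =
      ENNReal.ofReal (if s k then α else 1 - α) := fun k => by
    split_ifs
    exacts [hpos k, hneg k]
  have hset : signPatternEvent β s = ⋂ k ∈ univ, β k ⁻¹' if s k then Set.Ioi 0 else Set.Iio 0 := by
    ext; simp [signPatternEvent]
  rw [hset, hindep.measure_inter_preimage_eq_mul _ fun k _ => by split_ifs <;> measurability,
    prod_congr rfl fun k _ => hfactor k,
    ← ENNReal.ofReal_prod_of_nonneg fun k _ => by split_ifs <;> linarith [hα.1, hα.2],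
    Fin.prod_univ_eq_prod_range (fun k => if s k then α else 1 - α), prod_ite, prod_const,
    prod_const]

theorem measure_signPatternEvent_add_measure_signPatternEvent_not (hindep : iIndepFun β μ)
    (hpos : ∀ k, μ {ω | 0 < β k ω} = ENNReal.ofReal α)
    (hneg : ∀ k, μ {ω | β k ω < 0} = ENNReal.ofReal (1 - α)) (hα : α ∈ Set.Icc (0 : ℝ) 1)
    (s : ℕ → Prop) [DecidablePred s] :
    μ (signPatternEvent β s) + μ (signPatternEvent β (¬s ·)) =
      ENNReal.ofReal (patternProb α #{k ∈ range d | s k} #{k ∈ range d | ¬s k}) := by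
  have hnonneg : ∀ a b : ℕ, 0 ≤ α ^ a * (1 - α) ^ b := fun a b =>
    mul_nonneg (pow_nonneg hα.1 a) (pow_nonneg (by linarith [hα.2]) b)
  rw [measure_signPatternEvent hindep hpos hneg hα, measure_signPatternEvent hindep hpos hneg hα,
    patternProb, ENNReal.ofReal_add (hnonneg _ _) (hnonneg _ _)]
  simp only [not_not]

theorem toReal_measure_le_sum_patternProb [IsProbabilityMeasure μ]
    (hmeas : ∀ k, Measurable (β k)) (hindep : iIndepFun β μ)
    (hpos : ∀ k, μ {ω | 0 < β k ω} = ENNReal.ofReal α)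
    (hneg : ∀ k, μ {ω | β k ω < 0} = ENNReal.ofReal (1 - α)) (hα : α ∈ Set.Icc (0 : ℝ) 1)
    {ι : Type*} (I : Finset ι) (s : ι → ℕ → Prop) [∀ i, DecidablePred (s i)] {A : Set Ω}
    (hA : ∀ ω ∈ A, (∀ k, β k ω ≠ 0) → ∃ i ∈ I,
      (∀ k : Fin d, 0 < β k ω ↔ s i k) ∨ (∀ k : Fin d, 0 < β k ω ↔ ¬s i k)) :
    (μ A).toReal ≤ ∑ i ∈ I, patternProb α #{k ∈ range d | s i k} #{k ∈ range d | ¬s i k} := by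
  have hsub : A ⊆ (⋃ k, {ω | β k ω = 0}) ∪
      ⋃ i ∈ I, (signPatternEvent β (s i) ∪ signPatternEvent β (¬s i ·)) := fun ω hω => by
    by_cases hne : ∀ k, β k ω ≠ 0
    · obtain ⟨i, hi, hpat | hpat⟩ := hA ω hω hne
      · exact Or.inr (Set.mem_biUnion hi (Or.inl (mem_signPatternEvent hne hpat)))
      · exact Or.inr (Set.mem_biUnion hi (Or.inr (mem_signPatternEvent hne hpat)))
    · simp only [not_forall, not_not] at hne
      exact Or.inl (Set.mem_iUnion.mpr hne)
  have hnull : μ (⋃ k, {ω | β k ω = 0}) = 0 := measure_iUnion_null fun k =>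
    measure_eq_zero_of_measure_pos_add_measure_neg (hmeas k) (by
      rw [hpos, hneg, ← ENNReal.ofReal_add hα.1 (by linarith [hα.2]), add_sub_cancel,
        ENNReal.ofReal_one])
  refine ENNReal.toReal_le_of_le_ofReal (sum_nonneg fun i _ => patternProb_nonneg hα _ _) ?_
  calc μ A
      ≤ μ (⋃ k, {ω | β k ω = 0}) +
          μ (⋃ i ∈ I, (signPatternEvent β (s i) ∪ signPatternEvent β (¬s i ·))) :=
        (measure_mono hsub).trans (measure_union_le _ _)
    _ ≤ ∑ i ∈ I, (μ (signPatternEvent β (s i)) + μ (signPatternEvent β (¬s i ·))) := by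
        rw [hnull, zero_add]
        exact (measure_biUnion_finset_le _ _).trans (sum_le_sum fun i _ => measure_union_le _ _)
    _ = _ := by
        rw [ENNReal.ofReal_sum_of_nonneg fun i _ => patternProb_nonneg hα _ _]
        exact sum_congr rfl fun i _ =>
          measure_signPatternEvent_add_measure_signPatternEvent_not hindep hpos hneg hα (s i)

theorem toReal_measure_numInternalEquilibria_eq_sub_one_le [IsProbabilityMeasure μ] (hd : 0 < d)
    (hmeas : ∀ k, Measurable (β k)) (hindep : iIndepFun β μ)
    (hpos : ∀ k, μ {ω | 0 < β k ω} = ENNReal.ofReal α)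
    (hneg : ∀ k, μ {ω | β k ω < 0} = ENNReal.ofReal (1 - α)) (hα : α ∈ Set.Icc (0 : ℝ) 1) :
    (μ {ω | numInternalEquilibria d (fun k => β k ω) = d - 1}).toReal ≤
      patternProb α ((d + 1) / 2) (d / 2) := by
  have := toReal_measure_le_sum_patternProb hmeas hindep hpos hneg hα {()} (fun _ => Even)
    fun ω hω hne => ⟨(), mem_singleton_self _,
      sign_pattern_of_numInternalEquilibria_eq_sub_one hne hd hω⟩
  have hsplit := card_filter_add_card_filter_not (s := range d) Even
  rw [card_range, card_filter_range_even] at hsplit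
  rwa [sum_singleton, card_filter_range_even,
    show #{k ∈ range d | ¬Even k} = d / 2 by omega] at this

theorem toReal_measure_numInternalEquilibria_eq_sub_two_le [IsProbabilityMeasure μ] (hd : 2 ≤ d)
    (hmeas : ∀ k, Measurable (β k)) (hindep : iIndepFun β μ)
    (hpos : ∀ k, μ {ω | 0 < β k ω} = ENNReal.ofReal α)
    (hneg : ∀ k, μ {ω | β k ω < 0} = ENNReal.ofReal (1 - α)) (hα : α ∈ Set.Icc (0 : ℝ) 1) :
    (μ {ω | numInternalEquilibria d (fun k => β k ω) = d - 2}).toReal ≤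
      ∑ j ∈ range (d - 1), patternProb α (d / 2 + if Even j then 1 else 0)
        ((d + 1) / 2 - if Even j then 1 else 0) := by
  refine (toReal_measure_le_sum_patternProb hmeas hindep hpos hneg hα (range (d - 1))
    (fun j k => (Even k ↔ k ≤ j)) fun ω hω hne => ?_).trans_eq (sum_congr rfl fun j hj => ?_)
  · obtain ⟨j, hj, hpat⟩ :=
      exists_sign_pattern_of_numInternalEquilibria_eq_sub_two hne hd hω
    exact ⟨j, mem_range.mpr hj, hpat⟩
  · have hsplit := card_filter_add_card_filter_not (s := range d) (fun k => (Even k ↔ k ≤ j))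
    rw [card_range] at hsplit
    rw [card_filter_range_even_iff_le (by simp at hj; omega)] at hsplit ⊢
    congr 1
    split_ifs at hsplit ⊢ <;> omega

end Probability

/-- For a `d`-player two-strategy random evolutionary game with
`P(β_k > 0) = α` and `P(β_k < 0) = 1 − α`:
(i) `p_{d−1} ≤ (α(1−α))^{(d−1)/2}` if `d` is odd, `p_{d−1} ≤ 2(α(1−α))^{d/2}` if
`d` is even, and in both cases `p_{d−1} ≤ 1/2^{d−1}`;
(ii) if `d ≥ 3` is odd then `p_{d−2} ≤ (d−1)·(α(1−α))^{(d−1)/2}`;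
(iii) if `d ≥ 3` then `p_{d−2} ≤ (d−1)/2^{d−1}`. -/
theorem prob_internalEquilibria_upper_bounds_general
    {Ω : Type*} [MeasurableSpace Ω] (μ : Measure Ω) [IsProbabilityMeasure μ]
    (d : ℕ) (hd : 2 ≤ d) (α : ℝ) (hα : α ∈ Set.Icc (0 : ℝ) 1)
    (β : Fin d → Ω → ℝ)
    (hmeas : ∀ k, Measurable (β k))
    (hindep : iIndepFun β μ)
    (hpos : ∀ k, μ {ω | 0 < β k ω} = ENNReal.ofReal α)
    (hneg : ∀ k, μ {ω | β k ω < 0} = ENNReal.ofReal (1 - α)) :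
    ((Odd d →
        (μ {ω | numInternalEquilibria d (fun k => β k ω) = d - 1}).toReal ≤
          (α * (1 - α)) ^ ((d - 1) / 2)) ∧
      (Even d →
        (μ {ω | numInternalEquilibria d (fun k => β k ω) = d - 1}).toReal ≤
          2 * (α * (1 - α)) ^ (d / 2)) ∧
      (μ {ω | numInternalEquilibria d (fun k => β k ω) = d - 1}).toReal ≤
        1 / 2 ^ (d - 1)) ∧
    (3 ≤ d → Odd d →
      (μ {ω | numInternalEquilibria d (fun k => β k ω) = d - 2}).toReal ≤
        ((d : ℝ) - 1) * (α * (1 - α)) ^ ((d - 1) / 2)) ∧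
    (3 ≤ d →
      (μ {ω | numInternalEquilibria d (fun k => β k ω) = d - 2}).toReal ≤
        ((d : ℝ) - 1) / 2 ^ (d - 1)) := by
  have h1 := toReal_measure_numInternalEquilibria_eq_sub_one_le (by omega) hmeas hindep hpos hneg hα
  have h2 := toReal_measure_numInternalEquilibria_eq_sub_two_le hd hmeas hindep hpos hneg hα
  have hcard : ((range (d - 1)).card : ℝ) = d - 1 := by
    rw [card_range, Nat.cast_sub (by omega), Nat.cast_one]
  refine ⟨⟨fun ⟨t, ht⟩ => ?_, fun ⟨t, ht⟩ => ?_, ?_⟩, fun _ ⟨t, ht⟩ => ?_, fun hd3 => ?_⟩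
  · rw [show (d - 1) / 2 = t by omega]
    exact h1.trans_eq (patternProb_of_add_eq_two_mul_add_one (by omega) (by omega) (by omega))
  · rw [show d / 2 = t by omega, ← patternProb_self]
    convert h1 using 2 <;> omega
  · exact h1.trans (patternProb_le_inv_two_pow hα (by omega) (by omega) (by omega) (by omega)
      (by omega))
  · rw [show (d - 1) / 2 = t by omega, ← hcard, ← nsmul_eq_mul, ← sum_const]
    exact h2.trans_eq (sum_congr rfl fun j _ => patternProb_of_add_eq_two_mul_add_one
      (by split_ifs <;> omega) (by split_ifs <;> omega) (by split_ifs <;> omega))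
  · refine h2.trans ((sum_le_card_nsmul _ _ (1 / 2 ^ (d - 1)) fun j _ => ?_).trans_eq ?_)
    · exact patternProb_le_inv_two_pow hα (by split_ifs <;> omega) (by split_ifs <;> omega)
        (by split_ifs <;> omega) (by split_ifs <;> omega) (by split_ifs <;> omega)
    · rw [nsmul_eq_mul, hcard, mul_one_div]
end
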